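/- arXiv:2004.01574 — 2 statements merged into one kernel-verified Lean document; each statement's English description precedes it below -/
import Mathlib

section
/- Suppose w : ℝ × ℝ^n → ℝ is C¹ and satisfies the Hamilton–Jacobi–Bellman boundary problem: ∂_t w(t, x) + sup_{u ∈ V} [ L(t, x, u) + ⟨∇_x w(t, x), f(t, x, u)⟩ ] = 0 for all (t, x) ∈ [0,T] × ℝ^n, and w(T, x) = g(x) for all x ∈ ℝ^n. Suppose U : [0,T] × ℝ^n → V attains the supremum, i.e. L(t, x, U(t,x)) + ⟨∇_x w(t, x), f(t, x, U(t,x))⟩ = sup_{u ∈ V} [ L(t, x, u) + ⟨∇_x w(t, x), f(t, x, u)⟩ ] for all (t,x) ∈ [0,T] × ℝ^n. Let x* : [0,T] → ℝ^n be C¹ with x*'(t) = f(t, x*(t), U(t, x*(t))) for all t ∈ [0,T] and x*(0) = x₀, set u*(t) = U(t, x*(t)), and assume u* is continuous. Then for every admissible pair (v, y) with initial condition x₀ one has J(u*, x*) ≥ J(v, y); that is, the feedback control U is optimal. -/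
open Set
open scoped RealInnerProductSpace

/-!
Along any admissible pair `(v, y)`, the chain rule and the HJB equation give
`d/ds w(s, y s) = ∂ₜw + ⟪∇ₓw, f(s, y s, v s)⟫ ≤ -L(s, y s, v s)`, with equality along the
feedback trajectory, where `U` attains the supremum. Integrating over `[0, T]` and using
`w(T, ·) = g` yields `J(v, y) ≤ w(0, x₀) = J(u*, x*)`.
-/

section ChainRule

variable {E : Type*} [NormedAddCommGroup E] [InnerProductSpace ℝ E]

theorem deriv_comp_prodMk_const_eq_fderiv {w : ℝ × E → ℝ} {t : ℝ} {x : E}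
    (hw : DifferentiableAt ℝ w (t, x)) :
    deriv (fun τ => w (τ, x)) t = fderiv ℝ w (t, x) (1, 0) :=
  (hw.hasFDerivAt.comp_hasDerivAt t ((hasDerivAt_id t).prodMk (hasDerivAt_const t x))).deriv

variable [CompleteSpace E]

theorem inner_gradient_comp_prodMk_eq_fderiv {w : ℝ × E → ℝ} {t : ℝ} {x : E}
    (hw : DifferentiableAt ℝ w (t, x)) (h : E) :
    ⟪gradient (fun ξ => w (t, ξ)) x, h⟫ = fderiv ℝ w (t, x) (0, h) := by
  have hcomp : HasFDerivAt (fun ξ => w (t, ξ))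
      ((fderiv ℝ w (t, x)).comp (ContinuousLinearMap.inr ℝ ℝ E)) x :=
    hw.hasFDerivAt.comp x ((hasFDerivAt_const t x).prodMk (hasFDerivAt_id x))
  rw [gradient, hcomp.fderiv, InnerProductSpace.toDual_symm_apply]
  rfl

theorem hasDerivAt_comp_time_prodMk {w : ℝ × E → ℝ} {y : ℝ → E} {y' : E} {t : ℝ}
    (hw : DifferentiableAt ℝ w (t, y t)) (hy : HasDerivAt y y' t) :
    HasDerivAt (fun s => w (s, y s))
      (deriv (fun τ => w (τ, y t)) t + ⟪gradient (fun ξ => w (t, ξ)) (y t), y'⟫) t := by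
  have hsplit : ((1 : ℝ), y') = ((1 : ℝ), (0 : E)) + ((0 : ℝ), y') := by simp
  rw [deriv_comp_prodMk_const_eq_fderiv hw, inner_gradient_comp_prodMk_eq_fderiv hw,
    ← map_add, ← hsplit]
  exact hw.hasFDerivAt.comp_hasDerivAt t ((hasDerivAt_id t).prodMk hy)

end ChainRule

section Integration

variable {E : Type*} [NormedAddCommGroup E] [InnerProductSpace ℝ E] [CompleteSpace E]
  {w : ℝ × E → ℝ} {y c : ℝ → E} {φ : ℝ → ℝ} {a b : ℝ}

theorem sub_le_integral_of_deriv_add_inner_gradient_le (hw : Differentiable ℝ w) (hab : a ≤ b)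
    (hy : ∀ s ∈ Icc a b, HasDerivAt y (c s) s) (hφ : ContinuousOn φ (Icc a b))
    (hle : ∀ s ∈ Ioo a b,
      deriv (fun τ => w (τ, y s)) s + ⟪gradient (fun ξ => w (s, ξ)) (y s), c s⟫ ≤ φ s) :
    w (b, y b) - w (a, y a) ≤ ∫ s in a..b, φ s := by
  have hderiv := fun s hs => hasDerivAt_comp_time_prodMk (hw (s, y s)) (hy s hs)
  exact intervalIntegral.sub_le_integral_of_hasDeriv_right_of_le hab
    (HasDerivAt.continuousOn hderiv)
    (fun s hs => (hderiv s (Ioo_subset_Icc_self hs)).hasDerivWithinAt)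
    (hφ.integrableOn_compact isCompact_Icc) hle

theorem integral_le_sub_of_le_deriv_add_inner_gradient (hw : Differentiable ℝ w) (hab : a ≤ b)
    (hy : ∀ s ∈ Icc a b, HasDerivAt y (c s) s) (hφ : ContinuousOn φ (Icc a b))
    (hle : ∀ s ∈ Ioo a b,
      φ s ≤ deriv (fun τ => w (τ, y s)) s + ⟪gradient (fun ξ => w (s, ξ)) (y s), c s⟫) :
    ∫ s in a..b, φ s ≤ w (b, y b) - w (a, y a) := by
  have hderiv := fun s hs => hasDerivAt_comp_time_prodMk (hw (s, y s)) (hy s hs)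
  exact intervalIntegral.integral_le_sub_of_hasDeriv_right_of_le hab
    (HasDerivAt.continuousOn hderiv)
    (fun s hs => (hderiv s (Ioo_subset_Icc_self hs)).hasDerivWithinAt)
    (hφ.integrableOn_compact isCompact_Icc) hle

end Integration

theorem Continuous.continuousOn_comp_time_state_control {X V : Type*} [TopologicalSpace X]
    [TopologicalSpace V] {L : ℝ → X → V → ℝ}
    (hL : Continuous fun q : ℝ × X × V => L q.1 q.2.1 q.2.2) {s : Set ℝ} {y : ℝ → X}
    {v : ℝ → V} (hy : ContinuousOn y s) (hv : ContinuousOn v s) :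
    ContinuousOn (fun t => L t (y t) (v t)) s :=
  hL.comp_continuousOn (continuousOn_id.prodMk (hy.prodMk hv))

theorem feedback_control_optimal_general (n : ℕ) (V : Type*) [MetricSpace V]
    (T : ℝ) (hT : 0 < T)
    (L : ℝ → EuclideanSpace ℝ (Fin n) → V → ℝ)
    (f : ℝ → EuclideanSpace ℝ (Fin n) → V → EuclideanSpace ℝ (Fin n))
    (hL : Continuous fun q : ℝ × EuclideanSpace ℝ (Fin n) × V => L q.1 q.2.1 q.2.2)
    (g : EuclideanSpace ℝ (Fin n) → ℝ)
    (w : ℝ × EuclideanSpace ℝ (Fin n) → ℝ)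
    (hw : ContDiff ℝ 1 w)
    (U : ℝ → EuclideanSpace ℝ (Fin n) → V)
    (hU : ∀ t ∈ Icc (0:ℝ) T, ∀ x : EuclideanSpace ℝ (Fin n),
      IsGreatest
        (Set.range fun u : V =>
          L t x u + ⟪gradient (fun ξ => w (t, ξ)) x, f t x u⟫)
        (L t x (U t x) + ⟪gradient (fun ξ => w (t, ξ)) x, f t x (U t x)⟫))
    (hHJB : ∀ t ∈ Icc (0:ℝ) T, ∀ x : EuclideanSpace ℝ (Fin n),
      deriv (fun τ => w (τ, x)) t
        + sSup (Set.range fun u : V =>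
            L t x u + ⟪gradient (fun ξ => w (t, ξ)) x, f t x u⟫) = 0)
    (hwT : ∀ x : EuclideanSpace ℝ (Fin n), w (T, x) = g x)
    (x₀ : EuclideanSpace ℝ (Fin n))
    (xs : ℝ → EuclideanSpace ℝ (Fin n))
    (hxs : ∀ t ∈ Icc (0:ℝ) T, HasDerivAt xs (f t (xs t) (U t (xs t))) t)
    (hxs0 : xs 0 = x₀)
    (hus : ContinuousOn (fun t => U t (xs t)) (Icc 0 T)) :
    ∀ (v : ℝ → V) (y : ℝ → EuclideanSpace ℝ (Fin n)),
      ContinuousOn v (Icc 0 T) →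
      (∀ s ∈ Icc (0:ℝ) T, HasDerivAt y (f s (y s) (v s)) s) →
      y 0 = x₀ →
      (∫ s in (0:ℝ)..T, L s (y s) (v s)) + g (y T)
        ≤ (∫ s in (0:ℝ)..T, L s (xs s) (U s (xs s))) + g (xs T) := by
  intro v y hv hy hy0
  have hwd : Differentiable ℝ w := hw.differentiable one_ne_zero
  have hyC : ContinuousOn y (Icc 0 T) := HasDerivAt.continuousOn hy
  have hxsC : ContinuousOn xs (Icc 0 T) := HasDerivAt.continuousOn hxs
  have hJy : w (T, y T) - w (0, y 0) ≤ ∫ s in (0:ℝ)..T, -L s (y s) (v s) := by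
    refine sub_le_integral_of_deriv_add_inner_gradient_le hwd hT.le hy
      (hL.continuousOn_comp_time_state_control hyC hv).neg fun s hs => ?_
    have hmax := hU s (Ioo_subset_Icc_self hs) (y s)
    have hhjb := hHJB s (Ioo_subset_Icc_self hs) (y s)
    rw [hmax.csSup_eq] at hhjb
    linarith [hmax.2 ⟨v s, rfl⟩]
  have hJxs : ∫ s in (0:ℝ)..T, -L s (xs s) (U s (xs s)) ≤ w (T, xs T) - w (0, xs 0) := by
    refine integral_le_sub_of_le_deriv_add_inner_gradient hwd hT.le hxs
      (hL.continuousOn_comp_time_state_control hxsC hus).neg fun s hs => ?_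
    have hhjb := hHJB s (Ioo_subset_Icc_self hs) (xs s)
    rw [(hU s (Ioo_subset_Icc_self hs) (xs s)).csSup_eq] at hhjb
    linarith
  rw [intervalIntegral.integral_neg, hy0, hwT] at hJy
  rw [intervalIntegral.integral_neg, hxs0, hwT] at hJxs
  linarith

/-- Verification theorem (sufficient condition of optimality), optimality part.
Suppose `w : ℝ × ℝ^n → ℝ` is `C¹` and satisfies the Hamilton–Jacobi–Bellman boundary
problem: `∂ₜ w(t,x) + sup_{u ∈ V} [L(t,x,u) + ⟪∇ₓ w(t,x), f(t,x,u)⟫] = 0` on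
`[0,T] × ℝ^n` and `w(T,x) = g x`.  Suppose `U : [0,T] × ℝ^n → V` attains the supremum
(so the value at `U t x` is the greatest element of the corresponding range).  If
`x*` is `C¹` with `x*'(t) = f(t, x*(t), U(t, x*(t)))` on `[0,T]`, `x*(0) = x₀`, and
`u*(t) = U(t, x*(t))` is continuous, then for every admissible pair `(v, y)` with
initial condition `x₀` one has `J(u*, x*) ≥ J(v, y)`, where
`J(v, y) = ∫₀ᵀ L(s, y(s), v(s)) ds + g(y T)`. -/
theorem feedback_control_optimal (n : ℕ) (V : Type*) [MetricSpace V] [Nonempty V]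
    (T : ℝ) (hT : 0 < T)
    (L : ℝ → EuclideanSpace ℝ (Fin n) → V → ℝ)
    (f : ℝ → EuclideanSpace ℝ (Fin n) → V → EuclideanSpace ℝ (Fin n))
    (hL : Continuous fun q : ℝ × EuclideanSpace ℝ (Fin n) × V => L q.1 q.2.1 q.2.2)
    (hf : Continuous fun q : ℝ × EuclideanSpace ℝ (Fin n) × V => f q.1 q.2.1 q.2.2)
    (g : EuclideanSpace ℝ (Fin n) → ℝ)
    (w : ℝ × EuclideanSpace ℝ (Fin n) → ℝ)
    (hw : ContDiff ℝ 1 w)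
    (U : ℝ → EuclideanSpace ℝ (Fin n) → V)
    (hU : ∀ t ∈ Icc (0:ℝ) T, ∀ x : EuclideanSpace ℝ (Fin n),
      IsGreatest
        (Set.range fun u : V =>
          L t x u + ⟪gradient (fun ξ => w (t, ξ)) x, f t x u⟫)
        (L t x (U t x) + ⟪gradient (fun ξ => w (t, ξ)) x, f t x (U t x)⟫))
    (hHJB : ∀ t ∈ Icc (0:ℝ) T, ∀ x : EuclideanSpace ℝ (Fin n),
      deriv (fun τ => w (τ, x)) t
        + sSup (Set.range fun u : V =>
            L t x u + ⟪gradient (fun ξ => w (t, ξ)) x, f t x u⟫) = 0)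
    (hwT : ∀ x : EuclideanSpace ℝ (Fin n), w (T, x) = g x)
    (x₀ : EuclideanSpace ℝ (Fin n))
    (xs : ℝ → EuclideanSpace ℝ (Fin n))
    (hxs : ∀ t ∈ Icc (0:ℝ) T, HasDerivAt xs (f t (xs t) (U t (xs t))) t)
    (hxs0 : xs 0 = x₀)
    (hus : ContinuousOn (fun t => U t (xs t)) (Icc 0 T)) :
    ∀ (v : ℝ → V) (y : ℝ → EuclideanSpace ℝ (Fin n)),
      ContinuousOn v (Icc 0 T) →
      (∀ s ∈ Icc (0:ℝ) T, HasDerivAt y (f s (y s) (v s)) s) →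
      y 0 = x₀ →
      (∫ s in (0:ℝ)..T, L s (y s) (v s)) + g (y T)
        ≤ (∫ s in (0:ℝ)..T, L s (xs s) (U s (xs s))) + g (xs T) :=
  feedback_control_optimal_general n V T hT L f hL g w hw U hU hHJB hwT x₀ xs hxs hxs0 hus
end

section
/- Suppose w : ℝ × ℝ^n → ℝ is C¹ and satisfies the Hamilton–Jacobi–Bellman boundary problem: ∂_t w(t, x) + sup_{u ∈ V} [ L(t, x, u) + ⟨∇_x w(t, x), f(t, x, u)⟩ ] = 0 for all (t, x) ∈ [0,T] × ℝ^n, and w(T, x) = g(x) for all x ∈ ℝ^n. Suppose U : [0,T] × ℝ^n → V attains the supremum, i.e. L(t, x, U(t,x)) + ⟨∇_x w(t, x), f(t, x, U(t,x))⟩ = sup_{u ∈ V} [ L(t, x, u) + ⟨∇_x w(t, x), f(t, x, u)⟩ ] for all (t,x) ∈ [0,T] × ℝ^n. Let x* : [0,T] → ℝ^n be C¹ with x*'(t) = f(t, x*(t), U(t, x*(t))) for all t ∈ [0,T] and x*(0) = x₀, set u*(t) = U(t, x*(t)), and assume u* is continuous. Then J(u*, x*) = w(0, x₀); consequently w(0,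 x₀) is the greatest element of the set { J(v, y) : (v, y) an admissible pair with initial condition x₀ }, i.e. w(0, x₀) equals the value of the optimal control problem at (0, x₀). -/
/-!
Along any admissible pair `(v, y)`, the chain rule and the fundamental theorem of calculus give
`J(v, y) = w(0, x₀) + ∫₀ᵀ [L + ∂ₜw + ⟪∇ₓw, f⟫](s, y s, v s) ds`.
The HJB equation says the integrand is `≤ 0` for every control and `= 0` for the maximiser `U`,
so `J(v, y) ≤ w(0, x₀)` with equality along `(u*, x*)`.
-/

open Set MeasureTheory intervalIntegral
open scoped RealInnerProductSpace

section AlongCurve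

variable {E : Type*} [NormedAddCommGroup E] [NormedSpace ℝ E] {w : ℝ × E → ℝ} {y y' : ℝ → E}

theorem ContDiff.continuousOn_fderiv_apply_one_prodMk (hw : ContDiff ℝ 1 w) {s : Set ℝ}
    (hy : ContinuousOn y s) (hy' : ContinuousOn y' s) :
    ContinuousOn (fun t => fderiv ℝ w (t, y t) (1, y' t)) s :=
  ((hw.continuous_fderiv one_ne_zero).comp_continuousOn (continuousOn_id.prodMk hy)).clm_apply
    (continuousOn_const.prodMk hy')

theorem integral_fderiv_apply_one_prodMk_eq_sub (hw : ContDiff ℝ 1 w) {a b : ℝ} (hab : a ≤ b)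
    (hy : ∀ t ∈ Icc a b, HasDerivAt y (y' t) t) (hy' : ContinuousOn y' (Icc a b)) :
    ∫ t in a..b, fderiv ℝ w (t, y t) (1, y' t) = w (b, y b) - w (a, y a) := by
  have hderiv : ∀ t ∈ uIcc a b,
      HasDerivAt (fun t => w (t, y t)) (fderiv ℝ w (t, y t) (1, y' t)) t := fun t ht =>
    (hw.differentiable one_ne_zero (t, y t)).hasFDerivAt.comp_hasDerivAt t
      ((hasDerivAt_id t).prodMk (hy t (uIcc_of_le hab ▸ ht)))
  have hint := hw.continuousOn_fderiv_apply_one_prodMk (HasDerivAt.continuousOn hy) hy'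
  exact intervalIntegral.integral_eq_sub_of_hasDerivAt hderiv (hint.intervalIntegrable_of_Icc hab)

/-- `L + ∂ₜw + ⟪∇ₓw, f⟫`, written through the full derivative of `w`. -/
noncomputable def hjbResidual {V : Type*} (L : ℝ → E → V → ℝ) (f : ℝ → E → V → E)
    (w : ℝ × E → ℝ) (t : ℝ) (x : E) (u : V) : ℝ :=
  L t x u + fderiv ℝ w (t, x) (1, f t x u)

variable {V : Type*} [TopologicalSpace V] {L : ℝ → E → V → ℝ} {f : ℝ → E → V → E}

theorem integral_add_sub_eq_integral_hjbResidual
    (hL : Continuous fun q : ℝ × E × V => L q.1 q.2.1 q.2.2)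
    (hf : Continuous fun q : ℝ × E × V => f q.1 q.2.1 q.2.2) (hw : ContDiff ℝ 1 w)
    {a b : ℝ} (hab : a ≤ b) {v : ℝ → V} (hv : ContinuousOn v (Icc a b))
    (hy : ∀ t ∈ Icc a b, HasDerivAt y (f t (y t) (v t)) t) :
    (∫ t in a..b, L t (y t) (v t)) + w (b, y b) - w (a, y a)
      = ∫ t in a..b, hjbResidual L f w t (y t) (v t) := by
  have hyc : ContinuousOn y (Icc a b) := HasDerivAt.continuousOn hy
  have hyv : ContinuousOn (fun t => (t, y t, v t)) (Icc a b) :=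
    continuousOn_id.prodMk (hyc.prodMk hv)
  have hLc : ContinuousOn (fun t => L t (y t) (v t)) (Icc a b) := hL.comp_continuousOn hyv
  have hfc : ContinuousOn (fun t => f t (y t) (v t)) (Icc a b) := hf.comp_continuousOn hyv
  unfold hjbResidual
  rw [intervalIntegral.integral_add (hLc.intervalIntegrable_of_Icc hab)
    ((hw.continuousOn_fderiv_apply_one_prodMk hyc hfc).intervalIntegrable_of_Icc hab),
    integral_fderiv_apply_one_prodMk_eq_sub hw hab hy hfc]
  ring

end AlongCurve

section Hamiltonian

variable {E : Type*} [NormedAddCommGroup E] [InnerProductSpace ℝ E] [CompleteSpace E]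
  {V : Type*} {L : ℝ → E → V → ℝ} {f : ℝ → E → V → E} {w : ℝ × E → ℝ} {t : ℝ} {x : E}

theorem fderiv_apply_one_eq_deriv_add_inner_gradient (hw : DifferentiableAt ℝ w (t, x)) (v : E) :
    fderiv ℝ w (t, x) (1, v)
      = deriv (fun τ => w (τ, x)) t + ⟪gradient (fun ξ => w (t, ξ)) x, v⟫ := by
  have hD := hw.hasFDerivAt
  have ht : HasDerivAt (fun τ => w (τ, x)) (fderiv ℝ w (t, x) (1, 0)) t :=
    hD.comp_hasDerivAt t ((hasDerivAt_id t).prodMk (hasDerivAt_const t x))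
  have hx : HasFDerivAt (fun ξ => w (t, ξ))
      ((fderiv ℝ w (t, x)).comp ((0 : E →L[ℝ] ℝ).prod (ContinuousLinearMap.id ℝ E))) x :=
    hD.comp x ((hasFDerivAt_const t x).prodMk (hasFDerivAt_id x))
  rw [ht.deriv, inner_gradient_left, hx.fderiv, ContinuousLinearMap.comp_apply, ← map_add]
  simp

def preHamiltonian (L : ℝ → E → V → ℝ) (f : ℝ → E → V → E) (t : ℝ) (x p : E) (u : V) : ℝ :=
  L t x u + ⟪p, f t x u⟫

theorem hjbResidual_eq_deriv_add_preHamiltonian (hw : DifferentiableAt ℝ w (t, x)) (u : V) :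
    hjbResidual L f w t x u =
      deriv (fun τ => w (τ, x)) t + preHamiltonian L f t x (gradient (fun ξ => w (t, ξ)) x) u := by
  rw [hjbResidual, preHamiltonian, fderiv_apply_one_eq_deriv_add_inner_gradient hw]
  ring

theorem hjbResidual_le_zero (hw : DifferentiableAt ℝ w (t, x))
    (hbdd : BddAbove (range (preHamiltonian L f t x (gradient (fun ξ => w (t, ξ)) x))))
    (hHJB : deriv (fun τ => w (τ, x)) t
      + sSup (range (preHamiltonian L f t x (gradient (fun ξ => w (t, ξ)) x))) = 0) (u : V) :
    hjbResidual L f w t x u ≤ 0 := by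
  rw [hjbResidual_eq_deriv_add_preHamiltonian hw]
  linarith [le_csSup hbdd (mem_range_self u)]

theorem hjbResidual_eq_zero {u₀ : V} (hw : DifferentiableAt ℝ w (t, x))
    (hmax : IsGreatest (range (preHamiltonian L f t x (gradient (fun ξ => w (t, ξ)) x)))
      (preHamiltonian L f t x (gradient (fun ξ => w (t, ξ)) x) u₀))
    (hHJB : deriv (fun τ => w (τ, x)) t
      + sSup (range (preHamiltonian L f t x (gradient (fun ξ => w (t, ξ)) x))) = 0) :
    hjbResidual L f w t x u₀ = 0 := by
  rw [hjbResidual_eq_deriv_add_preHamiltonian hw, ← hmax.csSup_eq, hHJB]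

end Hamiltonian

theorem value_function_eq_w_general (n : ℕ) (V : Type*) [MetricSpace V]
    (T : ℝ) (hT : 0 < T)
    (L : ℝ → EuclideanSpace ℝ (Fin n) → V → ℝ)
    (f : ℝ → EuclideanSpace ℝ (Fin n) → V → EuclideanSpace ℝ (Fin n))
    (hL : Continuous fun q : ℝ × EuclideanSpace ℝ (Fin n) × V => L q.1 q.2.1 q.2.2)
    (hf : Continuous fun q : ℝ × EuclideanSpace ℝ (Fin n) × V => f q.1 q.2.1 q.2.2)
    (g : EuclideanSpace ℝ (Fin n) → ℝ)
    (w : ℝ × EuclideanSpace ℝ (Fin n) → ℝ)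
    (hw : ContDiff ℝ 1 w)
    (U : ℝ → EuclideanSpace ℝ (Fin n) → V)
    (hU : ∀ t ∈ Icc (0:ℝ) T, ∀ x : EuclideanSpace ℝ (Fin n),
      IsGreatest
        (Set.range fun u : V =>
          L t x u + ⟪gradient (fun ξ => w (t, ξ)) x, f t x u⟫)
        (L t x (U t x) + ⟪gradient (fun ξ => w (t, ξ)) x, f t x (U t x)⟫))
    (hHJB : ∀ t ∈ Icc (0:ℝ) T, ∀ x : EuclideanSpace ℝ (Fin n),
      deriv (fun τ => w (τ, x)) t
        + sSup (Set.range fun u : V =>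
            L t x u + ⟪gradient (fun ξ => w (t, ξ)) x, f t x u⟫) = 0)
    (hwT : ∀ x : EuclideanSpace ℝ (Fin n), w (T, x) = g x)
    (x₀ : EuclideanSpace ℝ (Fin n))
    (xs : ℝ → EuclideanSpace ℝ (Fin n))
    (hxs : ∀ t ∈ Icc (0:ℝ) T, HasDerivAt xs (f t (xs t) (U t (xs t))) t)
    (hxs0 : xs 0 = x₀)
    (hus : ContinuousOn (fun t => U t (xs t)) (Icc 0 T)) :
    ((∫ s in (0:ℝ)..T, L s (xs s) (U s (xs s))) + g (xs T) = w (0, x₀))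
      ∧ IsGreatest
          {J : ℝ | ∃ (v : ℝ → V) (y : ℝ → EuclideanSpace ℝ (Fin n)),
            ContinuousOn v (Icc 0 T)
            ∧ (∀ s ∈ Icc (0:ℝ) T, HasDerivAt y (f s (y s) (v s)) s)
            ∧ y 0 = x₀
            ∧ J = (∫ s in (0:ℝ)..T, L s (y s) (v s)) + g (y T)}
          (w (0, x₀)) := by
  have hwd : Differentiable ℝ w := hw.differentiable one_ne_zero
  have payoff : ∀ {v : ℝ → V} {y : ℝ → EuclideanSpace ℝ (Fin n)}, ContinuousOn v (Icc 0 T) →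
      (∀ s ∈ Icc (0:ℝ) T, HasDerivAt y (f s (y s) (v s)) s) → y 0 = x₀ →
      (∫ s in (0:ℝ)..T, L s (y s) (v s)) + g (y T)
        = w (0, x₀) + ∫ s in (0:ℝ)..T, hjbResidual L f w s (y s) (v s) := by
    intro v y hv hy hy0
    rw [← integral_add_sub_eq_integral_hjbResidual hL hf hw hT.le hv hy, hy0, hwT]
    ring
  have optimal : (∫ s in (0:ℝ)..T, L s (xs s) (U s (xs s))) + g (xs T) = w (0, x₀) := by
    rw [payoff hus hxs hxs0, integral_congr (g := fun _ => 0) fun s hs =>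
      have hs : s ∈ Icc 0 T := uIcc_of_le hT.le ▸ hs
      hjbResidual_eq_zero (hwd _) (hU s hs _) (hHJB s hs _)]
    simp
  refine ⟨optimal, ⟨_, xs, hus, hxs, hxs0, optimal.symm⟩, ?_⟩
  rintro _ ⟨v, y, hv, hy, hy0, rfl⟩
  rw [payoff hv hy hy0, add_le_iff_nonpos_right, ← neg_nonneg, ← intervalIntegral.integral_neg]
  exact integral_nonneg hT.le fun s hs =>
    neg_nonneg.2 (hjbResidual_le_zero (hwd _) (hU s hs _).bddAbove (hHJB s hs _) _)

/-- Verification theorem: the solution of the HJB boundary problem is the value function.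
Suppose `w : ℝ × ℝ^n → ℝ` is `C¹` and satisfies the Hamilton–Jacobi–Bellman boundary
problem: `∂ₜ w(t,x) + sup_{u ∈ V} [L(t,x,u) + ⟪∇ₓ w(t,x), f(t,x,u)⟫] = 0` on
`[0,T] × ℝ^n` and `w(T,x) = g x`.  Suppose `U : [0,T] × ℝ^n → V` attains the supremum
(so the value at `U t x` is the greatest element of the corresponding range).  If
`x*` is `C¹` with `x*'(t) = f(t, x*(t), U(t, x*(t)))` on `[0,T]`, `x*(0) = x₀`, and
`u*(t) = U(t, x*(t))` is continuous, then `J(u*, x*) = w(0, x₀)` and `w(0, x₀)`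
is the greatest element of the set of payoffs `J(v, y)` over all admissible pairs
`(v, y)` with initial condition `x₀`, where
`J(v, y) = ∫₀ᵀ L(s, y(s), v(s)) ds + g(y T)`; that is, `w(0, x₀)` is the value of the
optimal control problem at `(0, x₀)`. -/
theorem value_function_eq_w (n : ℕ) (V : Type*) [MetricSpace V] [Nonempty V]
    (T : ℝ) (hT : 0 < T)
    (L : ℝ → EuclideanSpace ℝ (Fin n) → V → ℝ)
    (f : ℝ → EuclideanSpace ℝ (Fin n) → V → EuclideanSpace ℝ (Fin n))
    (hL : Continuous fun q : ℝ × EuclideanSpace ℝ (Fin n) × V => L q.1 q.2.1 q.2.2)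
    (hf : Continuous fun q : ℝ × EuclideanSpace ℝ (Fin n) × V => f q.1 q.2.1 q.2.2)
    (g : EuclideanSpace ℝ (Fin n) → ℝ)
    (w : ℝ × EuclideanSpace ℝ (Fin n) → ℝ)
    (hw : ContDiff ℝ 1 w)
    (U : ℝ → EuclideanSpace ℝ (Fin n) → V)
    (hU : ∀ t ∈ Icc (0:ℝ) T, ∀ x : EuclideanSpace ℝ (Fin n),
      IsGreatest
        (Set.range fun u : V =>
          L t x u + ⟪gradient (fun ξ => w (t, ξ)) x, f t x u⟫)
        (L t x (U t x) + ⟪gradient (fun ξ => w (t, ξ)) x, f t x (U t x)⟫))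
    (hHJB : ∀ t ∈ Icc (0:ℝ) T, ∀ x : EuclideanSpace ℝ (Fin n),
      deriv (fun τ => w (τ, x)) t
        + sSup (Set.range fun u : V =>
            L t x u + ⟪gradient (fun ξ => w (t, ξ)) x, f t x u⟫) = 0)
    (hwT : ∀ x : EuclideanSpace ℝ (Fin n), w (T, x) = g x)
    (x₀ : EuclideanSpace ℝ (Fin n))
    (xs : ℝ → EuclideanSpace ℝ (Fin n))
    (hxs : ∀ t ∈ Icc (0:ℝ) T, HasDerivAt xs (f t (xs t) (U t (xs t))) t)
    (hxs0 : xs 0 = x₀)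
    (hus : ContinuousOn (fun t => U t (xs t)) (Icc 0 T)) :
    ((∫ s in (0:ℝ)..T, L s (xs s) (U s (xs s))) + g (xs T) = w (0, x₀))
      ∧ IsGreatest
          {J : ℝ | ∃ (v : ℝ → V) (y : ℝ → EuclideanSpace ℝ (Fin n)),
            ContinuousOn v (Icc 0 T)
            ∧ (∀ s ∈ Icc (0:ℝ) T, HasDerivAt y (f s (y s) (v s)) s)
            ∧ y 0 = x₀
            ∧ J = (∫ s in (0:ℝ)..T, L s (y s) (v s)) + g (y T)}
          (w (0, x₀)) :=
  value_function_eq_w_general n V T hT L f hL hf g w hw U hU hHJB hwT x₀ xs hxs hxs0 hus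
end
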